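/- arXiv:1610.01116 — 7 statements merged into one kernel-verified Lean document; each statement's English description precedes it below -/
import Mathlib

section
/- Let α and β be nonincreasing integer sequences of length n with α ≽ β. If ω₁ = {i₁,…,i_k} and ω₂ = {j₁,…,j_k} are sets of k distinct indices with i₁ ≥ j₁, …, i_k ≥ j_k, then the sequence obtained from α by subtracting 1 at each index of ω₁ majorizes the sequence obtained from β by subtracting 1 at each index of ω₂, and likewise the sequence obtained from α by adding 1 at each index of ω₂ majorizes the sequence obtained from β by adding 1 at each index of ω₁. -/
/-- `G` is a (labeled) realization of the degree sequence `α` if the degree of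
vertex `v` in `G` equals `α v` for every `v`. -/
def IsRealization {n : ℕ} (α : Fin n → ℕ) (G : SimpleGraph (Fin n)) : Prop :=
  ∀ v : Fin n, (G.neighborSet v).ncard = α v

/-- A sequence is graphic if it has a realization. -/
def Graphic {n : ℕ} (α : Fin n → ℕ) : Prop :=
  ∃ G : SimpleGraph (Fin n), IsRealization α G

/-- The edge `{i,j}` is forced for `α` if it lies in every realization of `α`. -/
def ForcedEdge {n : ℕ} (α : Fin n → ℕ) (i j : Fin n) : Prop :=
  ∀ G : SimpleGraph (Fin n), IsRealization α G → G.Adj i j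

/-- The edge `{i,j}` is forbidden for `α` if it lies in no realization of `α`. -/
def ForbiddenEdge {n : ℕ} (α : Fin n → ℕ) (i j : Fin n) : Prop :=
  ∀ G : SimpleGraph (Fin n), IsRealization α G → ¬ G.Adj i j

/-- `α` majorizes `β`: every partial sum of `α` is at least the corresponding
partial sum of `β`, and the total sums agree. -/
def Majorizes {n : ℕ} (α β : Fin n → ℕ) : Prop :=
  (∀ k : ℕ, k ≤ n →
    ∑ i ∈ Finset.univ.filter (fun i : Fin n => (i : ℕ) < k), β i ≤
    ∑ i ∈ Finset.univ.filter (fun i : Fin n => (i : ℕ) < k), α i) ∧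
  ∑ i, α i = ∑ i, β i

/-!
Subtracting 1 at the indices in a set `S` lowers the `m`-th partial sum by the number of those
indices below `m`. Since `i t ≥ j t`, no more indices of `ω₁` than of `ω₂` lie below any `m`, so the
partial sums of `⊖_{ω₁} α` lose no more than those of `⊖_{ω₂} β`, while both totals drop
by `k`; adding 1 is symmetric.
-/

open Finset

section ShiftSum

variable {ι : Type*} [DecidableEq ι] (A S : Finset ι) (γ : ι → ℕ)

theorem sum_ite_mem_sub_one (hγ : ∀ v ∈ S, 1 ≤ γ v) :
    ∑ v ∈ A, (if v ∈ S then γ v - 1 else γ v) = ∑ v ∈ A, γ v - #(A ∩ S) := by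
  have hle : ∀ v ∈ A, (if v ∈ S then 1 else 0) ≤ γ v := by
    intro v _
    split_ifs with hv
    exacts [hγ v hv, Nat.zero_le _]
  calc ∑ v ∈ A, (if v ∈ S then γ v - 1 else γ v)
      = ∑ v ∈ A, (γ v - if v ∈ S then 1 else 0) := by
        refine sum_congr rfl fun v _ => ?_
        split_ifs <;> rfl
    _ = ∑ v ∈ A, γ v - #(A ∩ S) := by
        rw [sum_tsub_distrib A hle, sum_ite_mem, ← card_eq_sum_ones]

theorem sum_ite_mem_add_one :
    ∑ v ∈ A, (if v ∈ S then γ v + 1 else γ v) = ∑ v ∈ A, γ v + #(A ∩ S) := by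
  calc ∑ v ∈ A, (if v ∈ S then γ v + 1 else γ v)
      = ∑ v ∈ A, (γ v + if v ∈ S then 1 else 0) := by
        refine sum_congr rfl fun v _ => ?_
        split_ifs <;> rfl
    _ = ∑ v ∈ A, γ v + #(A ∩ S) := by
        rw [sum_add_distrib, sum_ite_mem, ← card_eq_sum_ones]

end ShiftSum

theorem card_inter_image_of_injective {κ α : Type*} [DecidableEq α] (A : Finset α)
    (s : Finset κ) {f : κ → α} (hf : Function.Injective f) :
    #(A ∩ s.image f) = #{t ∈ s | f t ∈ A} := by
  rw [inter_comm, ← filter_mem_eq_inter, filter_image, card_image_of_injective _ hf]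

theorem card_inter_image_le_of_mem_imp {κ α : Type*} [DecidableEq α] (A : Finset α)
    (s : Finset κ) {i j : κ → α} (hi : Function.Injective i) (hj : Function.Injective j)
    (hij : ∀ t ∈ s, i t ∈ A → j t ∈ A) :
    #(A ∩ s.image i) ≤ #(A ∩ s.image j) := by
  rw [card_inter_image_of_injective A s hi, card_inter_image_of_injective A s hj]
  exact card_le_card fun t ht => by
    rw [mem_filter] at ht ⊢
    exact ⟨ht.1, hij t ht.1 ht.2⟩

def CountBelowLE {n : ℕ} (S T : Finset (Fin n)) : Prop :=
  ∀ m : ℕ,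
    #(({v | (v : ℕ) < m} : Finset (Fin n)) ∩ S) ≤ #(({v | (v : ℕ) < m} : Finset (Fin n)) ∩ T)

theorem countBelowLE_image {n : ℕ} {κ : Type*} (s : Finset κ) {i j : κ → Fin n}
    (hi : Function.Injective i) (hj : Function.Injective j) (hij : ∀ t ∈ s, j t ≤ i t) :
    CountBelowLE (s.image i) (s.image j) := fun _ =>
  card_inter_image_le_of_mem_imp _ s hi hj fun t ht hit => by
    simp only [mem_filter, mem_univ, true_and] at hit ⊢
    exact lt_of_le_of_lt (hij t ht) hit

namespace Majorizes

variable {n : ℕ} {α β : Fin n → ℕ} {S T : Finset (Fin n)}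

theorem ite_mem_sub_one (h : Majorizes α β)
    (hST : CountBelowLE S T) (hcard : #S = #T)
    (hα : ∀ v ∈ S, 1 ≤ α v) (hβ : ∀ v ∈ T, 1 ≤ β v) :
    Majorizes (fun v => if v ∈ S then α v - 1 else α v)
      (fun v => if v ∈ T then β v - 1 else β v) := by
  refine ⟨fun m hm => ?_, ?_⟩
  · rw [sum_ite_mem_sub_one _ S α hα, sum_ite_mem_sub_one _ T β hβ]
    exact tsub_le_tsub (h.1 m hm) (hST m)
  · rw [sum_ite_mem_sub_one _ S α hα, sum_ite_mem_sub_one _ T β hβ, univ_inter, univ_inter,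
      h.2, hcard]

theorem ite_mem_add_one (h : Majorizes α β)
    (hST : CountBelowLE S T) (hcard : #S = #T) :
    Majorizes (fun v => if v ∈ T then α v + 1 else α v)
      (fun v => if v ∈ S then β v + 1 else β v) := by
  refine ⟨fun m hm => ?_, ?_⟩
  · rw [sum_ite_mem_add_one, sum_ite_mem_add_one]
    exact add_le_add (h.1 m hm) (hST m)
  · rw [sum_ite_mem_add_one, sum_ite_mem_add_one, univ_inter, univ_inter, h.2, hcard]

end Majorizes

theorem fulkerson_ryser_general {n k : ℕ} (α β : Fin n → ℕ)
    (i : Fin k → Fin n) (j : Fin k → Fin n)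
    (hi : Function.Injective i) (hj : Function.Injective j)
    (hij : ∀ t : Fin k, j t ≤ i t)
    (hαpos : ∀ t : Fin k, 1 ≤ α (i t)) (hβpos : ∀ t : Fin k, 1 ≤ β (j t))
    (h : Majorizes α β) :
    Majorizes (fun v : Fin n => if v ∈ Finset.image i Finset.univ then α v - 1 else α v)
        (fun v : Fin n => if v ∈ Finset.image j Finset.univ then β v - 1 else β v) ∧
    Majorizes (fun v : Fin n => if v ∈ Finset.image j Finset.univ then α v + 1 else α v)
        (fun v : Fin n => if v ∈ Finset.image i Finset.univ then β v + 1 else β v) := by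
  have hprefix := countBelowLE_image univ hi hj fun t _ => hij t
  have hcard : #(univ.image i) = #(univ.image j) := by
    rw [card_image_of_injective _ hi, card_image_of_injective _ hj]
  have hα : ∀ v ∈ univ.image i, 1 ≤ α v := by simpa using hαpos
  have hβ : ∀ v ∈ univ.image j, 1 ≤ β v := by simpa using hβpos
  exact ⟨h.ite_mem_sub_one hprefix hcard hα hβ, h.ite_mem_add_one hprefix hcard⟩

/-- Fulkerson–Ryser: if `α ≽ β` are nonincreasing sequences, and
`ω₁ = {i₁,…,i_k}`, `ω₂ = {j₁,…,j_k}` are sets of `k` distinct indices with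
`i_t ≥ j_t` for every `t` (all entries involved staying within `0` and `n-1`),
then `⊖_{ω₁} α ≽ ⊖_{ω₂} β` and `⊕_{ω₂} α ≽ ⊕_{ω₁} β`. -/
theorem fulkerson_ryser {n k : ℕ} (α β : Fin n → ℕ)
    (hα : Antitone α) (hβ : Antitone β)
    (i : Fin k → Fin n) (j : Fin k → Fin n)
    (hi : Function.Injective i) (hj : Function.Injective j)
    (hij : ∀ t : Fin k, j t ≤ i t)
    (hαpos : ∀ t : Fin k, 1 ≤ α (i t)) (hβpos : ∀ t : Fin k, 1 ≤ β (j t))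
    (hαub : ∀ t : Fin k, α (j t) + 1 ≤ n - 1) (hβub : ∀ t : Fin k, β (i t) + 1 ≤ n - 1)
    (h : Majorizes α β) :
    Majorizes (fun v : Fin n => if v ∈ Finset.image i Finset.univ then α v - 1 else α v)
        (fun v : Fin n => if v ∈ Finset.image j Finset.univ then β v - 1 else β v) ∧
    Majorizes (fun v : Fin n => if v ∈ Finset.image j Finset.univ then α v + 1 else α v)
        (fun v : Fin n => if v ∈ Finset.image i Finset.univ then β v + 1 else β v) :=
  fulkerson_ryser_general α β i j hi hj hij hαpos hβpos h
end

section
/- If α is a graphic sequence of length n and α majorizes β (where β is a nonincreasing sequence of length n with the same total sum and dominated partial sums), then β is graphic. -/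
/-! If `α ≠ β`, let `j` be the first index with `α j < β j`. Majorization forces some `i < j`
with `β i < α i`, and as `β` is nonincreasing, `α i ≥ α j + 2`. Moving one unit from `i` to `j`
keeps `α` majorizing `β`, since the partial sums ending between `i` and `j` had slack. It also
keeps `α` graphic: in a realization, `i` has a neighbour `k ≠ j` not adjacent to `j`, and
replacing the edge `ik` by `jk` realizes the new sequence. Each move lowers the total of the
partial sums, so finitely many moves turn `α` into `β`. -/

namespace SimpleGraph

variable {V : Type*} (G : SimpleGraph V) {i j k v : V}

def moveEdge (i j k : V) : SimpleGraph V :=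
  G.deleteEdges {s(i, k)} ⊔ edge j k

lemma moveEdge_adj {a b : V} :
    (G.moveEdge i j k).Adj a b ↔
      G.Adj a b ∧ ¬(a = i ∧ b = k ∨ a = k ∧ b = i) ∨
        (a = j ∧ b = k ∨ a = k ∧ b = j) ∧ a ≠ b := by
  simp [moveEdge, edge_adj]

lemma neighborSet_moveEdge_left (hij : i ≠ j) (hik : i ≠ k) :
    (G.moveEdge i j k).neighborSet i = G.neighborSet i \ {k} := by
  ext b
  simp only [mem_neighborSet, moveEdge_adj, Set.mem_sdiff, Set.mem_singleton_iff]
  grind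

lemma neighborSet_moveEdge_mid (hij : i ≠ j) (hjk : j ≠ k) :
    (G.moveEdge i j k).neighborSet j = insert k (G.neighborSet j) := by
  ext b
  simp only [mem_neighborSet, moveEdge_adj, Set.mem_insert_iff]
  grind

lemma neighborSet_moveEdge_right (hik : i ≠ k) (hjk : j ≠ k) :
    (G.moveEdge i j k).neighborSet k = insert j (G.neighborSet k \ {i}) := by
  ext b
  simp only [mem_neighborSet, moveEdge_adj, Set.mem_insert_iff, Set.mem_sdiff,
    Set.mem_singleton_iff]
  grind

lemma neighborSet_moveEdge_of_ne (hvi : v ≠ i) (hvj : v ≠ j) (hvk : v ≠ k) :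
    (G.moveEdge i j k).neighborSet v = G.neighborSet v := by
  ext b
  simp only [mem_neighborSet, moveEdge_adj]
  grind

lemma exists_adj_not_adj_of_ncard_lt [Finite V]
    (hlt : (G.neighborSet j).ncard + 1 < (G.neighborSet i).ncard) :
    ∃ k, G.Adj i k ∧ k ≠ j ∧ ¬G.Adj j k := by
  by_contra! hsub
  have : (G.neighborSet i \ {j}).ncard ≤ (G.neighborSet j).ncard :=
    Set.ncard_le_ncard (fun k ⟨hik, hkj⟩ => hsub k hik hkj) (Set.toFinite _)
  have := Set.pred_ncard_le_ncard_sdiff_singleton (G.neighborSet i) j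
  omega

end SimpleGraph

section UnitTransfer

variable {ι : Type*} [DecidableEq ι] (α : ι → ℕ) {i j : ι}

def unitTransfer (i j : ι) : ι → ℕ :=
  Function.update (Function.update α i (α i - 1)) j (α j + 1)

lemma unitTransfer_apply_left (hij : i ≠ j) : unitTransfer α i j i = α i - 1 := by
  simp [unitTransfer, hij]

lemma unitTransfer_apply_right : unitTransfer α i j j = α j + 1 := by
  simp [unitTransfer]

lemma unitTransfer_apply_of_ne {v : ι} (hvi : v ≠ i) (hvj : v ≠ j) :
    unitTransfer α i j v = α v := by
  simp [unitTransfer, hvi, hvj]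

lemma unitTransfer_add_single (hij : i ≠ j) (hi : 0 < α i) :
    unitTransfer α i j + Pi.single i 1 = α + Pi.single j 1 := by
  ext v
  rcases eq_or_ne v i with rfl | hvi
  · simp [unitTransfer_apply_left α hij, hij]
    omega
  rcases eq_or_ne v j with rfl | hvj
  · simp [unitTransfer_apply_right, hvi]
  · simp [unitTransfer_apply_of_ne α hvi hvj, hvi, hvj]

lemma sum_unitTransfer [Fintype ι] (hij : i ≠ j) (hi : 0 < α i) :
    ∑ v, unitTransfer α i j v = ∑ v, α v := by
  have := congrArg (fun f => ∑ v, f v) (unitTransfer_add_single α hij hi)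
  simpa [Finset.sum_add_distrib] using this

end UnitTransfer

lemma Graphic.unitTransfer {n : ℕ} {α : Fin n → ℕ} {i j : Fin n} (hg : Graphic α)
    (hij : i ≠ j) (hgap : α j + 2 ≤ α i) : Graphic (unitTransfer α i j) := by
  obtain ⟨G, hG⟩ := hg
  obtain ⟨k, hik, hkj, hjk⟩ := G.exists_adj_not_adj_of_ncard_lt (i := i) (j := j)
    (by rw [hG, hG]; omega)
  have hik' : i ≠ k := hik.ne
  have hki : i ∈ G.neighborSet k := hik.symm
  replace hik : k ∈ G.neighborSet i := hik
  replace hjk : k ∉ G.neighborSet j := hjk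
  refine ⟨G.moveEdge i j k, fun v => ?_⟩
  rcases eq_or_ne v i with rfl | hvi
  · rw [G.neighborSet_moveEdge_left hij hik', Set.ncard_sdiff_singleton_of_mem hik, hG]
    exact (unitTransfer_apply_left α hij).symm
  rcases eq_or_ne v j with rfl | hvj
  · rw [G.neighborSet_moveEdge_mid hij hkj.symm, Set.ncard_insert_of_notMem hjk, hG,
      unitTransfer_apply_right]
  rcases eq_or_ne v k with rfl | hvk
  · rw [G.neighborSet_moveEdge_right hik' hkj.symm,
      Set.ncard_insert_of_notMem (fun h => hjk h.1.symm), Set.ncard_sdiff_singleton_of_mem hki,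
      hG, Nat.sub_add_cancel (hG v ▸ (Set.ncard_pos (Set.toFinite _)).2 ⟨i, hki⟩),
      unitTransfer_apply_of_ne α hvi hvj]
  · rw [G.neighborSet_moveEdge_of_ne hvi hvj hvk, hG, unitTransfer_apply_of_ne α hvi hvj]

section PartialSums

variable {n : ℕ}

def partialSum (f : Fin n → ℕ) (k : ℕ) : ℕ :=
  ∑ i ∈ Finset.univ.filter (fun i : Fin n => (i : ℕ) < k), f i

lemma majorizes_iff {α β : Fin n → ℕ} :
    Majorizes α β ↔
      (∀ k ≤ n, partialSum β k ≤ partialSum α k) ∧ ∑ i, α i = ∑ i, β i :=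
  Iff.rfl

lemma partialSum_add (f g : Fin n → ℕ) (k : ℕ) :
    partialSum (f + g) k = partialSum f k + partialSum g k :=
  Finset.sum_add_distrib

lemma partialSum_single_one (i : Fin n) (k : ℕ) :
    partialSum (Pi.single i 1) k = if (i : ℕ) < k then 1 else 0 := by
  simp [partialSum, Finset.sum_pi_single']

lemma partialSum_lt_partialSum {f g : Fin n → ℕ} {k : ℕ} {i : Fin n}
    (hle : ∀ m : Fin n, (m : ℕ) < k → f m ≤ g m) (hik : (i : ℕ) < k) (hlt : f i < g i) :
    partialSum f k < partialSum g k :=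
  Finset.sum_lt_sum (fun m hm => hle m (Finset.mem_filter.1 hm).2)
    ⟨i, by simpa using hik, hlt⟩

lemma partialSum_unitTransfer_add (α : Fin n → ℕ) {i j : Fin n} (hij : i ≠ j) (hi : 0 < α i)
    (k : ℕ) :
    partialSum (unitTransfer α i j) k + (if (i : ℕ) < k then 1 else 0) =
      partialSum α k + (if (j : ℕ) < k then 1 else 0) := by
  rw [← partialSum_single_one, ← partialSum_single_one, ← partialSum_add, ← partialSum_add,
    unitTransfer_add_single α hij hi]

def partialSumTotal (f : Fin n → ℕ) : ℕ :=
  ∑ k ∈ Finset.range n, partialSum f k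

lemma partialSumTotal_unitTransfer_lt (α : Fin n → ℕ) {i j : Fin n} (hij : i < j)
    (hi : 0 < α i) :
    partialSumTotal (unitTransfer α i j) < partialSumTotal α := by
  have key := partialSum_unitTransfer_add α hij.ne hi
  have hij' : (i : ℕ) < j := hij
  refine Finset.sum_lt_sum (fun k _ => ?_) ⟨j, Finset.mem_range.2 j.isLt, ?_⟩
  · have := key k
    split_ifs at this <;> omega
  · have := key j
    simp only [hij', lt_irrefl, if_true, if_false] at this
    omega

end PartialSums

lemma exists_excess_lt_deficit {n : ℕ} {α β : Fin n → ℕ} (h : Majorizes α β)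
    (hne : α ≠ β) :
    ∃ i j, i < j ∧ β i < α i ∧ α j < β j ∧ ∀ m, m < j → β m ≤ α m := by
  obtain ⟨hpsum, hsum⟩ := majorizes_iff.1 h
  have hdeficit : ∃ j, α j < β j := by
    by_contra! hge
    refine hne (funext fun v => ?_)
    exact ((Finset.sum_eq_sum_iff_of_le fun v _ => hge v).1 hsum.symm v (Finset.mem_univ v)).symm
  obtain ⟨j, hj, hjmin⟩ := wellFounded_lt.has_min {j | α j < β j} hdeficit
  have hge : ∀ m, m < j → β m ≤ α m := fun m hm => not_lt.1 fun h => hjmin m h hm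
  -- otherwise `α` and `β` agree below `j`, and the partial sums up to `j` violate majorization
  have hexcess : ∃ i < j, β i < α i := by
    by_contra! hle
    refine (hpsum (j + 1) j.isLt).not_gt
      (partialSum_lt_partialSum (fun m hm => ?_) (Nat.lt_succ_self j) hj)
    rcases (Nat.lt_succ_iff.1 hm).lt_or_eq with hmj | hmj
    · exact hle m hmj
    · exact (Fin.ext hmj ▸ hj).le
  obtain ⟨i, hij, hi⟩ := hexcess
  exact ⟨i, j, hij, hi, hj, hge⟩

lemma Majorizes.unitTransfer {n : ℕ} {α β : Fin n → ℕ} {i j : Fin n} (h : Majorizes α β)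
    (hij : i < j) (hi : β i < α i) (hge : ∀ m, m < j → β m ≤ α m) :
    Majorizes (unitTransfer α i j) β := by
  obtain ⟨hpsum, hsum⟩ := majorizes_iff.1 h
  have hij' : (i : ℕ) < j := hij
  refine majorizes_iff.2 ⟨fun k hk => ?_, ?_⟩
  · have key := partialSum_unitTransfer_add α hij.ne (by omega) k
    by_cases hik : (i : ℕ) < k
    · by_cases hjk : (j : ℕ) < k
      · simp only [hik, hjk, if_true] at key
        exact (hpsum k hk).trans_eq (by omega)
      · have hlt : partialSum β k < partialSum α k :=
          partialSum_lt_partialSum (fun m hm => hge m (by change (m : ℕ) < j; omega)) hik hi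
        simp only [hik, hjk, if_true, if_false] at key
        omega
    · have hjk : ¬(j : ℕ) < k := by omega
      simp only [hik, hjk, if_false] at key
      exact (hpsum k hk).trans_eq (by omega)
  · rw [sum_unitTransfer α hij.ne (by omega), hsum]

theorem majorized_by_graphic_is_graphic_general {n : ℕ} (α β : Fin n → ℕ)
    (hβ : Antitone β)
    (hαg : Graphic α) (h : Majorizes α β) :
    Graphic β := by
  induction hΦ : partialSumTotal α using Nat.strong_induction_on generalizing α with
  | _ d ih =>
    by_cases hne : α = β
    · exact hne ▸ hαg
    obtain ⟨i, j, hij, hi, hj, hge⟩ := exists_excess_lt_deficit h hne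
    have hgap : α j + 2 ≤ α i := by
      have := hβ hij.le
      omega
    exact ih _ (hΦ ▸ partialSumTotal_unitTransfer_lt α hij (by omega)) _
      (hαg.unitTransfer hij.ne hgap) (h.unitTransfer hij hi hge) rfl

/-- Ruch–Gutman: if the nonincreasing sequence `α` is graphic and
`α` majorizes the nonincreasing sequence `β`, then `β` is graphic. -/
theorem majorized_by_graphic_is_graphic {n : ℕ} (α β : Fin n → ℕ)
    (hα : Antitone α) (hβ : Antitone β)
    (hαg : Graphic α) (h : Majorizes α β) :
    Graphic β :=
  majorized_by_graphic_is_graphic_general α β hβ hαg h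
end

section
/- Let α be a nonincreasing sequence of length n with entries at most n−1 and let i be an index. Let α' be the sequence created from α by subtracting 1 from the first α_i entries of α other than the entry at index i (i.e., from the α_i largest-indexed-first entries, skipping index i) and then setting the entry at index i to 0. Then α is graphic if and only if α' is graphic. -/
open scoped symmDiff

namespace SimpleGraph

variable {V : Type*} {G C : SimpleGraph V}

lemma neighborSet_symmDiff (G H : SimpleGraph V) (v : V) :
    (G ∆ H).neighborSet v = G.neighborSet v ∆ H.neighborSet v := by
  ext w
  simp [symmDiff_def]

lemma IsCycles.ncard_neighborSet_symmDiff [Finite V] (hC : C.IsCycles)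
    (halt : C.IsAlternating G) (v : V) :
    ((G ∆ C).neighborSet v).ncard = (G.neighborSet v).ncard := by
  rw [neighborSet_symmDiff]
  rcases (C.neighborSet v).eq_empty_or_nonempty with hempty | hne
  · rw [hempty, ← Set.bot_eq_empty, symmDiff_bot]
  obtain ⟨x, y, hxy, hN⟩ := Set.ncard_eq_two.mp (hC hne)
  have hx : C.Adj v x := by simp [← mem_neighborSet, hN]
  have hy : C.Adj v y := by simp [← mem_neighborSet, hN]
  wlog hGx : G.Adj v x generalizing x y
  · exact this y x hxy.symm (by rw [hN, Set.pair_comm]) hy hx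
      ((halt hxy hx hy).not_left.mp hGx)
  have hGy : ¬ G.Adj v y := (halt hxy hx hy).mp hGx
  have heq : G.neighborSet v ∆ {x, y} = insert y (G.neighborSet v \ {x}) := by
    ext w
    simp only [Set.mem_symmDiff, Set.mem_insert_iff, Set.mem_singleton_iff, Set.mem_sdiff,
      mem_neighborSet]
    grind
  rw [hN, heq, Set.ncard_insert_of_notMem (fun h => hGy h.1),
    Set.ncard_sdiff_singleton_add_one (s := G.neighborSet v) hGx]

def cycle4 (a b c d : V) : SimpleGraph V :=
  fromRel fun x y => x = a ∧ y = b ∨ x = b ∧ y = c ∨ x = c ∧ y = d ∨ x = d ∧ y = a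

section cycle4

variable {a b c d : V}

lemma cycle4_rotate : cycle4 a b c d = cycle4 b c d a := by
  ext
  simp only [cycle4, fromRel_adj]
  tauto

lemma neighborSet_cycle4 (hab : a ≠ b) (had : a ≠ d) :
    (cycle4 a b c d).neighborSet a = {b, d} := by
  ext
  simp only [cycle4, mem_neighborSet, fromRel_adj, Set.mem_insert_iff, Set.mem_singleton_iff]
  grind

lemma isCycles_cycle4 (hab : a ≠ b) (hac : a ≠ c) (had : a ≠ d) (hbc : b ≠ c)
    (hbd : b ≠ d) (hcd : c ≠ d) : (cycle4 a b c d).IsCycles := by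
  rintro v ⟨w, hw⟩
  simp only [cycle4, mem_neighborSet, fromRel_adj] at hw
  obtain rfl | rfl | rfl | rfl : v = a ∨ v = b ∨ v = c ∨ v = d := by grind
  · rw [neighborSet_cycle4 hab had, Set.ncard_pair hbd]
  · rw [cycle4_rotate, neighborSet_cycle4 hbc hab.symm, Set.ncard_pair hac.symm]
  · rw [cycle4_rotate, cycle4_rotate, neighborSet_cycle4 hcd hbc.symm, Set.ncard_pair hbd.symm]
  · rw [cycle4_rotate, cycle4_rotate, cycle4_rotate, neighborSet_cycle4 had.symm hcd.symm,
      Set.ncard_pair hac]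

lemma isAlternating_cycle4 (hGab : G.Adj a b) (hGbc : ¬ G.Adj b c) (hGcd : G.Adj c d)
    (hGda : ¬ G.Adj d a) (hac : a ≠ c) (had : a ≠ d) (hbc : b ≠ c) (hbd : b ≠ d) :
    (cycle4 a b c d).IsAlternating G := by
  intro v w w' hww' hw hw'
  simp only [cycle4, fromRel_adj] at hw hw'
  have := hGab.ne
  have := hGcd.ne
  have := hGab.symm
  have := hGcd.symm
  have : ¬ G.Adj c b := fun h => hGbc h.symm
  have : ¬ G.Adj a d := fun h => hGda h.symm
  grind

lemma ncard_neighborSet_symmDiff_cycle4 [Finite V] (hGab : G.Adj a b) (hGbc : ¬ G.Adj b c)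
    (hGcd : G.Adj c d) (hGda : ¬ G.Adj d a) (hac : a ≠ c) (had : a ≠ d) (hbc : b ≠ c)
    (hbd : b ≠ d) (v : V) :
    ((G ∆ cycle4 a b c d).neighborSet v).ncard = (G.neighborSet v).ncard :=
  (isCycles_cycle4 hGab.ne hac had hbc hbd hGcd.ne).ncard_neighborSet_symmDiff
    (isAlternating_cycle4 hGab hGbc hGcd hGda hac had hbc hbd) v

lemma neighborSet_symmDiff_cycle4 (hGab : G.Adj a b) (hGda : ¬ G.Adj d a) (had : a ≠ d) :
    (G ∆ cycle4 a b c d).neighborSet a = insert d (G.neighborSet a \ {b}) := by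
  rw [neighborSet_symmDiff, neighborSet_cycle4 hGab.ne had]
  have : ¬ G.Adj a d := fun h => hGda h.symm
  ext w
  simp only [Set.mem_symmDiff, Set.mem_insert_iff, Set.mem_singleton_iff, Set.mem_sdiff,
    mem_neighborSet]
  grind

end cycle4

lemma exists_adj_not_adj_of_ncard_le [Finite V] {i s t : V} (hit : G.Adj i t) (his : ¬ G.Adj i s)
    (hsi : s ≠ i) (hdeg : (G.neighborSet t).ncard ≤ (G.neighborSet s).ncard) :
    ∃ u, G.Adj s u ∧ ¬ G.Adj t u ∧ u ≠ t := by
  by_contra! h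
  have hsub : G.neighborSet s \ {t} ⊂ G.neighborSet t \ {s} := by
    refine (Set.ssubset_iff_of_subset ?_).mpr ⟨i, ⟨hit.symm, hsi.symm⟩, fun hi => his hi.1.symm⟩
    rintro u ⟨hsu, hut⟩
    exact ⟨by_contra fun htu => hut (h u hsu htu), hsu.ne.symm⟩
  have hlt := Set.ncard_lt_ncard hsub
  by_cases hst : G.Adj s t
  · rw [← Set.ncard_sdiff_singleton_add_one (s := G.neighborSet s) hst,
      ← Set.ncard_sdiff_singleton_add_one (s := G.neighborSet t) hst.symm] at hdeg
    omega
  · rw [Set.sdiff_singleton_eq_self (s := G.neighborSet s) hst,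
      Set.sdiff_singleton_eq_self (s := G.neighborSet t) (mt G.adj_symm hst)] at hlt
    omega

lemma neighborSet_deleteIncidenceSet_self (x : V) : (G.deleteIncidenceSet x).neighborSet x = ∅ := by
  ext
  simp [deleteIncidenceSet_adj]

lemma neighborSet_deleteIncidenceSet_of_ne {x v : V} (hvx : v ≠ x) :
    (G.deleteIncidenceSet x).neighborSet v = G.neighborSet v \ {x} := by
  ext
  simp [deleteIncidenceSet_adj, hvx, and_comm]

end SimpleGraph

/-- The first `m` indices other than `i`; the rank of `v ≠ i` among the indices other than `i` is
`v` below `i` and `v - 1` above it. -/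
def firstExcept {n : ℕ} (i : Fin n) (m : ℕ) : Set (Fin n) :=
  {v | v ≠ i ∧ (if (v : ℕ) < i then (v : ℕ) else (v : ℕ) - 1) < m}

section firstExcept

variable {n : ℕ} {i : Fin n} {m : ℕ}

lemma ncard_setOf_val_lt (k : ℕ) : {v : Fin n | (v : ℕ) < k}.ncard = min n k := by
  rw [← Fin.card_filter_val_lt, ← Set.ncard_coe_finset]
  simp

lemma ncard_firstExcept (hm : m ≤ n - 1) : (firstExcept i m).ncard = m := by
  have hi := i.isLt
  by_cases hmi : m ≤ i
  · have : firstExcept i m = {v : Fin n | (v : ℕ) < m} := by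
      ext v
      simp only [firstExcept, Set.mem_ofPred_eq, ne_eq, Fin.ext_iff]
      split_ifs <;> omega
    rw [this, ncard_setOf_val_lt]
    omega
  · have : firstExcept i m = {v : Fin n | (v : ℕ) < m + 1} \ {i} := by
      ext v
      simp only [firstExcept, Set.mem_ofPred_eq, ne_eq, Fin.ext_iff, Set.mem_sdiff,
        Set.mem_singleton_iff]
      split_ifs <;> omega
    rw [this, Set.ncard_sdiff_singleton_of_mem (by simp only [Set.mem_ofPred_eq]; omega),
      ncard_setOf_val_lt]
    omega

lemma le_of_mem_firstExcept_of_notMem {v w : Fin n} (hv : v ∈ firstExcept i m)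
    (hw : w ∉ firstExcept i m) (hwi : w ≠ i) : v ≤ w := by
  simp only [firstExcept, Set.mem_ofPred_eq, ne_eq, Fin.ext_iff, not_and, Fin.le_def] at hv hw hwi ⊢
  split_ifs at hv hw <;> omega

end firstExcept

open Classical in
/-- Kleitman and Wang's "laying off" of vertex `i` onto `S`. -/
noncomputable def layOff {n : ℕ} (α : Fin n → ℕ) (i : Fin n) (S : Set (Fin n)) : Fin n → ℕ :=
  fun v => if v = i then 0 else if v ∈ S then α v - 1 else α v

namespace IsRealization

open SimpleGraph

variable {n : ℕ} {α : Fin n → ℕ} {G : SimpleGraph (Fin n)} {i : Fin n} {S : Set (Fin n)}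

theorem exists_neighborSet_eq (hG : IsRealization α G) (hS : S.ncard = α i) (hiS : i ∉ S)
    (hα : ∀ s ∈ S, ∀ t ∉ S, t ≠ i → α t ≤ α s) :
    ∃ G' : SimpleGraph (Fin n), IsRealization α G' ∧ G'.neighborSet i = S := by
  induction hm : (S \ G.neighborSet i).ncard generalizing G with
  | zero =>
    refine ⟨G, hG, (Set.eq_of_subset_of_ncard_le ?_ (by rw [hG i, hS])).symm⟩
    exact Set.sdiff_eq_empty.mp ((Set.ncard_eq_zero).mp hm)
  | succ m ih =>
    have hcard : (G.neighborSet i \ S).ncard = (S \ G.neighborSet i).ncard := by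
      have := hG i
      exact le_antisymm ((Set.ncard_le_ncard_iff_ncard_sdiff_le_ncard_sdiff).mp (by omega))
        ((Set.ncard_le_ncard_iff_ncard_sdiff_le_ncard_sdiff).mp (by omega))
    obtain ⟨s, hsS, his⟩ : (S \ G.neighborSet i).Nonempty :=
      Set.nonempty_of_ncard_ne_zero (by omega)
    obtain ⟨t, hit : G.Adj i t, htS⟩ : (G.neighborSet i \ S).Nonempty :=
      Set.nonempty_of_ncard_ne_zero (by omega)
    have hsi : s ≠ i := ne_of_mem_of_not_mem hsS hiS
    have hst : s ≠ t := ne_of_mem_of_not_mem hsS htS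
    obtain ⟨u, hsu, htu, hut⟩ := exists_adj_not_adj_of_ncard_le hit his hsi
      (by rw [hG, hG]; exact hα s hsS t htS hit.ne.symm)
    have hui : u ≠ i := by
      rintro rfl
      exact his hsu.symm
    have hGsi : ¬ G.Adj s i := mt G.adj_symm his
    refine ih (G := G ∆ cycle4 i t u s) (fun v => ?_) ?_
    · rw [ncard_neighborSet_symmDiff_cycle4 hit htu hsu.symm hGsi hui.symm hsi.symm hut.symm
        hst.symm, hG]
    · rw [neighborSet_symmDiff_cycle4 hit hGsi hsi.symm]
      have : S \ insert s (G.neighborSet i \ {t}) = (S \ G.neighborSet i) \ {s} := by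
        ext v
        simp only [Set.mem_sdiff, Set.mem_insert_iff, Set.mem_singleton_iff]
        grind
      rw [this, Set.ncard_sdiff_singleton_of_mem (show s ∈ S \ G.neighborSet i from ⟨hsS, his⟩),
        hm]
      rfl

theorem deleteIncidenceSet (hG : IsRealization α G) (hN : G.neighborSet i = S) :
    IsRealization (layOff α i S) (G.deleteIncidenceSet i) := by
  intro v
  by_cases hvi : v = i
  · subst hvi
    simp [neighborSet_deleteIncidenceSet_self, layOff]
  rw [neighborSet_deleteIncidenceSet_of_ne hvi]
  have hiv : i ∈ G.neighborSet v ↔ v ∈ S := by rw [← hN]; exact G.adj_comm v i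
  by_cases hvS : v ∈ S
  · rw [Set.ncard_sdiff_singleton_of_mem (hiv.mpr hvS), hG]
    simp [layOff, hvi, hvS]
  · rw [Set.sdiff_singleton_eq_self (mt hiv.mp hvS), hG]
    simp [layOff, hvi, hvS]

theorem sup_fromRel (hG : IsRealization (layOff α i S) G) (hS : S.ncard = α i) (hiS : i ∉ S)
    (hpos : ∀ v ∈ S, 1 ≤ α v) :
    IsRealization α (G ⊔ fromRel fun a b => a = i ∧ b ∈ S) := by
  have hGi : ∀ w, ¬ G.Adj i w := by
    have : G.neighborSet i = ∅ := (Set.ncard_eq_zero).mp (by simpa [layOff] using hG i)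
    exact fun w hw => this.subset hw
  intro v
  by_cases hvi : v = i
  · subst hvi
    have : (G ⊔ fromRel fun a b => a = v ∧ b ∈ S).neighborSet v = S := by
      ext w
      simp only [mem_neighborSet, sup_adj, fromRel_adj]
      grind
    rw [this, hS]
  by_cases hvS : v ∈ S
  · have : (G ⊔ fromRel fun a b => a = i ∧ b ∈ S).neighborSet v = insert i (G.neighborSet v) := by
      ext w
      simp only [mem_neighborSet, sup_adj, fromRel_adj, Set.mem_insert_iff]
      grind
    rw [this, Set.ncard_insert_of_notMem (s := G.neighborSet v) (hGi v ∘ G.adj_symm), hG]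
    simp only [layOff, hvi, hvS, if_false, if_true]
    have := hpos v hvS
    omega
  · have : (G ⊔ fromRel fun a b => a = i ∧ b ∈ S).neighborSet v = G.neighborSet v := by
      ext w
      simp only [mem_neighborSet, sup_adj, fromRel_adj]
      grind
    rw [this, hG]
    simp [layOff, hvi, hvS]

end IsRealization

/-- Kleitman–Wang: let `α` be a nonincreasing sequence with entries
at most `n-1` and let `i` be an index.  Let `α'` be the sequence obtained from `α`
by subtracting `1` from the first `α i` entries other than the entry at index `i`
(a vertex `v ≠ i` is among these first `α i` entries exactly when its rank among
the indices different from `i`, namely `v` if `v < i` and `v - 1` otherwise, is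
less than `α i`) and then setting the entry at index `i` to `0`.  Assuming the
decremented entries are positive, `α` is graphic if and only if `α'` is graphic. -/
theorem kleitman_wang {n : ℕ} (α : Fin n → ℕ) (hα : Antitone α)
    (hb : ∀ v, α v ≤ n - 1) (i : Fin n)
    (hpos : ∀ v : Fin n, v ≠ i →
      (if (v : ℕ) < (i : ℕ) then (v : ℕ) else (v : ℕ) - 1) < α i → 1 ≤ α v) :
    Graphic α ↔
      Graphic (fun v : Fin n =>
        if v = i then 0
        else if (if (v : ℕ) < (i : ℕ) then (v : ℕ) else (v : ℕ) - 1) < α i then α v - 1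
        else α v) := by
  set S := firstExcept i (α i)
  have hS : S.ncard = α i := ncard_firstExcept (hb i)
  have hiS : i ∉ S := fun h => h.1 rfl
  suffices h : Graphic α ↔ Graphic (layOff α i S) by
    convert h using 2
    funext v
    by_cases hvi : v = i <;> simp [layOff, S, firstExcept, hvi]
  constructor
  · rintro ⟨G, hG⟩
    obtain ⟨G', hG', hN⟩ := hG.exists_neighborSet_eq hS hiS
      fun s hs t ht hti => hα (le_of_mem_firstExcept_of_notMem hs ht hti)
    exact ⟨_, hG'.deleteIncidenceSet hN⟩
  · rintro ⟨G, hG⟩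
    exact ⟨_, hG.sup_fromRel hS hiS fun v hv => hpos v hv.1 hv.2⟩
end

section
/- Let α be a graphic degree sequence of length n and let i ≠ j be indices with α_i ≤ n−2 and α_j ≤ n−2. The edge {i,j} is forced for α if and only if the sequence ⊕_{i,j} α, obtained from α by adding 1 to the entries at indices i and j, is not graphic. -/
/-!
If `ij` is missing from a realization `G` of `α`, adding it realizes `⊕_{i,j} α`. Conversely, let
`G` realize `α` with `ij ∈ G` and `G'` realize `⊕_{i,j} α`; we find a realization of `α` avoiding
`ij`. If `ij ∈ G'`, delete it. If `G'` has `iu, jx` with `u ≠ x` and `ux ∉ G'`, the 2-switch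
`iu, jx → ij, ux` reduces to the previous case. Otherwise pick `u ∈ N_G'(i) \ N_G(i)`; a 2-switch
`ij, uw → iu, jw` in `G` works unless every `G`-neighbour `w ≠ j` of `u` is adjacent to `j`. In that
last case neighbourhood comparisons give `α u < α j` in `G` and `α j + 1 < α u` in `G'`.
-/

namespace SimpleGraph

variable {V : Type*} {G : SimpleGraph V} {a b c d u v w : V}

lemma neighborSet_sup_edge_left (hab : a ≠ b) :
    (G ⊔ edge a b).neighborSet a = insert b (G.neighborSet a) := by
  ext x
  simp only [mem_neighborSet, sup_adj, edge_adj, Set.mem_insert_iff]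
  aesop

lemma neighborSet_sup_edge_of_ne (hva : v ≠ a) (hvb : v ≠ b) :
    (G ⊔ edge a b).neighborSet v = G.neighborSet v := by
  ext x
  simp [edge_adj, hva, hvb]

lemma ncard_neighborSet_sup_edge [Finite V] [DecidableEq V] (hab : a ≠ b) (h : ¬G.Adj a b)
    (v : V) :
    ((G ⊔ edge a b).neighborSet v).ncard =
      (G.neighborSet v).ncard + (if v = a then 1 else 0) + (if v = b then 1 else 0) := by
  by_cases hva : v = a
  · subst hva
    rw [neighborSet_sup_edge_left hab,
      Set.ncard_insert_of_notMem (show b ∉ G.neighborSet v from h)]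
    simp [hab]
  by_cases hvb : v = b
  · subst hvb
    rw [edge_comm, neighborSet_sup_edge_left (Ne.symm hab),
      Set.ncard_insert_of_notMem fun h' => h h'.symm]
    simp [hva]
  · simp [neighborSet_sup_edge_of_ne hva hvb, hva, hvb]

lemma ncard_neighborSet_sdiff_edge [Finite V] [DecidableEq V] (h : G.Adj a b) (v : V) :
    ((G \ edge a b).neighborSet v).ncard + (if v = a then 1 else 0) +
      (if v = b then 1 else 0) = (G.neighborSet v).ncard := by
  have := ncard_neighborSet_sup_edge (G := G \ edge a b) h.ne (by simp [edge_adj, h.ne]) v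
  rwa [sdiff_sup_cancel ((edge_le_iff G).2 (Or.inr h)), eq_comm] at this

def twoSwitch (G : SimpleGraph V) (a b c d : V) : SimpleGraph V :=
  (G \ edge a b) \ edge c d ⊔ edge a c ⊔ edge b d

lemma twoSwitch_adj_left (hac : a ≠ c) : (G.twoSwitch a b c d).Adj a c := by
  simp [twoSwitch, edge_adj, hac]

lemma not_twoSwitch_adj (hbc : b ≠ c) (had : a ≠ d) : ¬(G.twoSwitch a b c d).Adj a b := by
  simp only [twoSwitch, sup_adj, sdiff_adj, edge_adj]
  aesop

lemma ncard_neighborSet_twoSwitch [Finite V] [DecidableEq V] (hab : G.Adj a b) (hcd : G.Adj c d)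
    (hac : ¬G.Adj a c) (hbd : ¬G.Adj b d) (hac' : a ≠ c) (hbd' : b ≠ d) (v : V) :
    ((G.twoSwitch a b c d).neighborSet v).ncard = (G.neighborSet v).ncard := by
  have h1 : (G \ edge a b).Adj c d := by
    simp only [sdiff_adj, edge_adj, hcd, true_and]
    rintro ⟨⟨rfl, rfl⟩ | ⟨rfl, rfl⟩, -⟩
    · exact hac' rfl
    · exact hbd hab.symm
  have h2 : ¬((G \ edge a b) \ edge c d).Adj a c := fun h => hac h.1.1
  have h3 : ¬((G \ edge a b) \ edge c d ⊔ edge a c).Adj b d := by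
    simp only [sup_adj, edge_adj, not_or]
    refine ⟨fun h => hbd h.1.1, ?_⟩
    rintro ⟨⟨rfl, rfl⟩ | ⟨rfl, rfl⟩, -⟩
    · exact hab.ne rfl
    · exact hac hcd.symm
  have e1 := ncard_neighborSet_sdiff_edge hab v
  have e2 := ncard_neighborSet_sdiff_edge h1 v
  have e3 := ncard_neighborSet_sup_edge hac' h2 v
  have e4 := ncard_neighborSet_sup_edge hbd' h3 v
  rw [twoSwitch, e4, e3]
  omega

/-- `swap u v` maps the neighbourhood of `u` into that of `v` minus `w`. -/
lemma ncard_neighborSet_lt_of_forall_adj [Finite V] [DecidableEq V]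
    (h : ∀ x, G.Adj u x → x ≠ v → G.Adj v x) (hvw : G.Adj v w) (huw : ¬G.Adj u w)
    (hwu : w ≠ u) :
    (G.neighborSet u).ncard < (G.neighborSet v).ncard := by
  rw [← Set.ncard_image_of_injective _ (Equiv.swap u v).injective]
  refine Set.ncard_lt_ncard ⟨?_, fun hsub => ?_⟩
  · rintro _ ⟨x, hux, rfl⟩
    by_cases hxv : x = v
    · subst hxv
      simpa using hux.symm
    · rw [Equiv.swap_apply_of_ne_of_ne hux.ne' hxv]
      exact h x hux hxv
  · obtain ⟨x, hux, hx⟩ := hsub hvw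
    by_cases hxv : x = v
    · subst hxv
      exact hwu (by simpa using hx.symm)
    · rw [Equiv.swap_apply_of_ne_of_ne hux.ne' hxv] at hx
      exact huw (hx ▸ hux)

end SimpleGraph

section Realization

open SimpleGraph

/-- The sequence `⊕_{i,j} α`. -/
def increment {n : ℕ} (α : Fin n → ℕ) (i j : Fin n) : Fin n → ℕ :=
  fun v => if v = i ∨ v = j then α v + 1 else α v

variable {n : ℕ} {α : Fin n → ℕ} {G G' : SimpleGraph (Fin n)} {a b c d i j : Fin n}

lemma increment_apply (hab : a ≠ b) (v : Fin n) :
    increment α a b v = α v + (if v = a then 1 else 0) + (if v = b then 1 else 0) := by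
  by_cases hva : v = a
  · simp [increment, hva, hab]
  · by_cases hvb : v = b <;> simp [increment, hva, hvb, Ne.symm hab]

namespace IsRealization

lemma sup_edge (hG : IsRealization α G) (hab : a ≠ b) (h : ¬G.Adj a b) :
    IsRealization (increment α a b) (G ⊔ edge a b) := fun v => by
  rw [ncard_neighborSet_sup_edge hab h, hG v, increment_apply hab]

lemma sdiff_edge (hG : IsRealization (increment α a b) G) (h : G.Adj a b) :
    IsRealization α (G \ edge a b) := fun v => by
  have := ncard_neighborSet_sdiff_edge h v
  rw [hG v, increment_apply h.ne] at this
  omega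

lemma twoSwitch (hG : IsRealization α G) (hab : G.Adj a b) (hcd : G.Adj c d)
    (hac : ¬G.Adj a c) (hbd : ¬G.Adj b d) (hac' : a ≠ c) (hbd' : b ≠ d) :
    IsRealization α (G.twoSwitch a b c d) := fun v =>
  (ncard_neighborSet_twoSwitch hab hcd hac hbd hac' hbd' v).trans (hG v)

end IsRealization

theorem exists_realization_not_adj_of_increment (hij : i ≠ j) (hG : IsRealization α G)
    (hGij : G.Adj i j) (hG' : IsRealization (increment α i j) G') :
    ∃ H, IsRealization α H ∧ ¬H.Adj i j := by
  by_cases hG'ij : G'.Adj i j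
  · exact ⟨G' \ edge i j, hG'.sdiff_edge hG'ij, by simp [edge_adj, hij]⟩
  by_cases hsw : ∃ u x, G'.Adj i u ∧ G'.Adj j x ∧ u ≠ x ∧ ¬G'.Adj u x
  · obtain ⟨u, x, hiu, hjx, hux, hnux⟩ := hsw
    have hS := hG'.twoSwitch hiu hjx hG'ij hnux hij hux
    exact ⟨_, hS.sdiff_edge (twoSwitch_adj_left hij), by simp [edge_adj, hij]⟩
  push Not at hsw
  have hdeg : (G.neighborSet i).ncard < (G'.neighborSet i).ncard := by
    rw [hG i, hG' i]
    simp [increment]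
  obtain ⟨u, hiu' : G'.Adj i u, hiu : ¬G.Adj i u⟩ :=
    Set.exists_mem_notMem_of_ncard_lt_ncard hdeg
  have hui : u ≠ i := hiu'.ne'
  have huj : u ≠ j := by rintro rfl; exact hG'ij hiu'
  by_cases hsw' : ∃ w, G.Adj u w ∧ w ≠ j ∧ ¬G.Adj j w
  · obtain ⟨w, huw, hwj, hjw⟩ := hsw'
    have hwi : w ≠ i := by rintro rfl; exact hiu huw.symm
    exact ⟨_, hG.twoSwitch hGij huw hiu hjw hui.symm hwj.symm,
      not_twoSwitch_adj huj.symm hwi.symm⟩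
  push Not at hsw'
  -- `N_G(u) - j ⊆ N_G(j) - i` and `N_G'(j) - u ⊆ N_G'(u) - i` compare `α u` and `α j` both ways.
  have hlt : α u < α j := by
    rw [← hG u, ← hG j]
    exact ncard_neighborSet_lt_of_forall_adj hsw' hGij.symm (fun h => hiu h.symm) hui.symm
  have hlt' : α j + 1 < α u := by
    have := ncard_neighborSet_lt_of_forall_adj (fun x hjx hxu => hsw u x hiu' hjx (Ne.symm hxu))
      hiu'.symm (fun h => hG'ij h.symm) hij
    rw [hG' j, hG' u] at this
    simpa [increment, hui, huj] using this
  omega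

end Realization

theorem forced_iff_increment_not_graphic_general {n : ℕ} (α : Fin n → ℕ)
    (hg : Graphic α)
    (i j : Fin n) (hij : i ≠ j) :
    ForcedEdge α i j ↔
      ¬ Graphic (fun v : Fin n => if v = i ∨ v = j then α v + 1 else α v) := by
  constructor
  · rintro hforced ⟨G', hG'⟩
    obtain ⟨G, hG⟩ := hg
    obtain ⟨H, hH, hHij⟩ := exists_realization_not_adj_of_increment hij hG (hforced G hG) hG'
    exact hHij (hforced H hH)
  · intro hng G hG
    by_contra hGij
    exact hng ⟨_, hG.sup_edge hij hGij⟩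

/-- for a graphic nonincreasing degree sequence `α` (entries at most
`n-1`) and indices `i ≠ j` with `α i ≤ n-2` and `α j ≤ n-2`, the edge `{i,j}` is
forced for `α` if and only if `⊕_{i,j} α` is not graphic. -/
theorem forced_iff_increment_not_graphic {n : ℕ} (α : Fin n → ℕ)
    (hα : Antitone α) (hb : ∀ v, α v ≤ n - 1) (hg : Graphic α)
    (i j : Fin n) (hij : i ≠ j) (hi : α i ≤ n - 2) (hj : α j ≤ n - 2) :
    ForcedEdge α i j ↔
      ¬ Graphic (fun v : Fin n => if v = i ∨ v = j then α v + 1 else α v) :=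
  forced_iff_increment_not_graphic_general α hg i j hij
end

section
/- Let α be a graphic degree sequence of length n and let i ≠ j be indices such that the edge {i,j} is forced for α. Then for every realization G of α and every vertex subset S of {1,…,n} with {i,j} ⊆ S, the edge {i,j} is forced for the degree sequence of the induced subgraph G[S]: that is, every simple graph on vertex set S in which each vertex v has the same degree as it has in G[S] contains the edge {i,j}. -/
/-!
Replacing the induced subgraph `G[S]` of a realization `G` by any graph `H` on `S` with the
same degrees yields another realization: a vertex outside `S` keeps its neighbourhood, and a
vertex in `S` trades its neighbours inside `S` for equally many `H`-neighbours. Since `{i,j}`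
is forced, it is an edge of the new graph, and as `i, j ∈ S` it must come from `H`.
-/

namespace SimpleGraph

variable {V : Type*} (G H : SimpleGraph V) (S : Set V)

/-- `G` with its induced subgraph on `S` replaced by `H`. -/
def spliceOn : SimpleGraph V := G.deleteEdges S.sym2 ⊔ H

variable {G H S}

lemma spliceOn_adj {v w : V} :
    (G.spliceOn H S).Adj v w ↔ (G.Adj v w ∧ ¬(v ∈ S ∧ w ∈ S)) ∨ H.Adj v w := by
  simp [spliceOn]

lemma spliceOn_adj_iff_of_mem {v w : V} (hv : v ∈ S) (hw : w ∈ S) :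
    (G.spliceOn H S).Adj v w ↔ H.Adj v w := by
  simp [spliceOn_adj, hv, hw]

variable (hH : ∀ v w, H.Adj v w → v ∈ S ∧ w ∈ S)
include hH

lemma neighborSet_spliceOn_of_mem {v : V} (hv : v ∈ S) :
    (G.spliceOn H S).neighborSet v = (G.neighborSet v \ S) ∪ H.neighborSet v := by
  ext w
  have := hH v w
  simp only [mem_neighborSet, spliceOn_adj, Set.mem_union, Set.mem_sdiff]
  tauto

lemma neighborSet_spliceOn_of_notMem {v : V} (hv : v ∉ S) :
    (G.spliceOn H S).neighborSet v = G.neighborSet v := by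
  ext w
  have := hH v w
  simp only [mem_neighborSet, spliceOn_adj]
  tauto

lemma ncard_neighborSet_spliceOn [Finite V]
    (hdeg : ∀ v ∈ S, (H.neighborSet v).ncard = (G.neighborSet v ∩ S).ncard) (v : V) :
    ((G.spliceOn H S).neighborSet v).ncard = (G.neighborSet v).ncard := by
  by_cases hv : v ∈ S
  · have hdisj : Disjoint (G.neighborSet v \ S) (H.neighborSet v) :=
      Set.disjoint_right.2 fun w hw hw' => hw'.2 (hH v w hw).2
    rw [neighborSet_spliceOn_of_mem hH hv, Set.ncard_union_eq hdisj, hdeg v hv, add_comm,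
      Set.ncard_inter_add_ncard_sdiff_eq_ncard]
  · rw [neighborSet_spliceOn_of_notMem hH hv]

end SimpleGraph

open SimpleGraph

lemma IsRealization.spliceOn {n : ℕ} {α : Fin n → ℕ} {G H : SimpleGraph (Fin n)}
    {S : Set (Fin n)} (hG : IsRealization α G) (hH : ∀ v w, H.Adj v w → v ∈ S ∧ w ∈ S)
    (hdeg : ∀ v ∈ S, (H.neighborSet v).ncard = (G.neighborSet v ∩ S).ncard) :
    IsRealization α (G.spliceOn H S) :=
  fun v => (ncard_neighborSet_spliceOn hH hdeg v).trans (hG v)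

theorem forced_in_induced_subgraph_general {n : ℕ} (α : Fin n → ℕ)
    (i j : Fin n) (hf : ForcedEdge α i j)
    (G : SimpleGraph (Fin n)) (hG : IsRealization α G)
    (S : Set (Fin n)) (hiS : i ∈ S) (hjS : j ∈ S) :
    ∀ H : SimpleGraph (Fin n),
      (∀ v w : Fin n, H.Adj v w → v ∈ S ∧ w ∈ S) →
      (∀ v ∈ S, (H.neighborSet v).ncard = (G.neighborSet v ∩ S).ncard) →
      H.Adj i j := fun _ hH hdeg =>
  (spliceOn_adj_iff_of_mem hiS hjS).1 (hf _ (hG.spliceOn hH hdeg))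

/-- if the edge `{i,j}` is forced for the graphic nonincreasing
degree sequence `α`, then for every realization `G` of `α` and every vertex set
`S` containing `i` and `j`, the edge `{i,j}` is forced for the degree sequence of
the induced subgraph `G[S]`: every simple graph `H` whose edges lie within `S` and
in which every vertex `v ∈ S` has the same degree as in `G[S]` (namely
`|N_G(v) ∩ S|`) contains the edge `{i,j}`. -/
theorem forced_in_induced_subgraph {n : ℕ} (α : Fin n → ℕ)
    (hα : Antitone α) (hb : ∀ v, α v ≤ n - 1) (hg : Graphic α)
    (i j : Fin n) (hij : i ≠ j) (hf : ForcedEdge α i j)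
    (G : SimpleGraph (Fin n)) (hG : IsRealization α G)
    (S : Set (Fin n)) (hiS : i ∈ S) (hjS : j ∈ S) :
    ∀ H : SimpleGraph (Fin n),
      (∀ v w : Fin n, H.Adj v w → v ∈ S ∧ w ∈ S) →
      (∀ v ∈ S, (H.neighborSet v).ncard = (G.neighborSet v ∩ S).ncard) →
      H.Adj i j :=
  forced_in_induced_subgraph_general α i j hf G hG S hiS hjS
end

section
/- Let α and β be graphic degree sequences of length n with α ≽ β (α majorizes β). Then every forced edge of β is a forced edge of α, and every forbidden edge of β is a forbidden edge of α: F(α) ⊇ F(β) and B(α) ⊇ B(β). -/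
/-!
A realization of `α` can be turned into a realization of `β` by a sequence of unit transfers
`γ ↦ γ - 𝟙_p + 𝟙_q`. Take `q` the first index with `γ q < β q` and `p < q` an index with
`β p < γ p`; as `β` is nonincreasing, `γ q < β q ≤ β p < γ p`, the new sequence still majorizes
`β`, and it is closer to `β`. In a realization `G` of `γ` the vertex `p` has at least two
neighbours `x ≠ q` not adjacent to `q`, and replacing the edge `px` by `qx` realizes the new
sequence. Since `{p, x}` and `{q, x}` can both equal a fixed edge `{i, j}` for at most one such `x`,
every transfer can be chosen to leave `{i, j}` alone, so some realization of `β` contains `{i, j}`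
exactly when `G` does.
-/

namespace SimpleGraph

variable {V : Type*} (G : SimpleGraph V)

lemma ncard_incidenceSet_eq_ncard_neighborSet [DecidableEq V] (v : V) :
    (G.incidenceSet v).ncard = (G.neighborSet v).ncard := by
  rw [← Nat.card_coe_set_eq, ← Nat.card_coe_set_eq,
    Nat.card_congr (G.incidenceSetEquivNeighborSet v)]

def replaceEdge (f e : Sym2 V) : SimpleGraph V :=
  fromEdgeSet (insert e (G.edgeSet \ {f}))

variable {G} {e f : Sym2 V}

lemma edgeSet_replaceEdge (he : ¬e.IsDiag) :
    (G.replaceEdge f e).edgeSet = insert e (G.edgeSet \ {f}) := by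
  ext e'
  by_cases h : e' = e
  · subst h
    simp [replaceEdge, he]
  · simp +contextual [replaceEdge, h, G.not_isDiag_of_mem_edgeSet]

lemma ncard_incidenceSet_replaceEdge_add [Finite V] [DecidableEq V] (hf : f ∈ G.edgeSet)
    (he : e ∉ G.edgeSet) (he' : ¬e.IsDiag) (v : V) :
    ((G.replaceEdge f e).incidenceSet v).ncard + (if v ∈ f then 1 else 0) =
      (G.incidenceSet v).ncard + (if v ∈ e then 1 else 0) := by
  have hdel : (G.incidenceSet v \ {f}).ncard + (if v ∈ f then 1 else 0) =
      (G.incidenceSet v).ncard := by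
    split_ifs with hvf
    · exact Set.ncard_sdiff_singleton_add_one ⟨hf, hvf⟩
    · rw [Set.sdiff_singleton_eq_self fun h => hvf h.2, add_zero]
  have hins : ((G.replaceEdge f e).incidenceSet v).ncard =
      (G.incidenceSet v \ {f}).ncard + (if v ∈ e then 1 else 0) := by
    have hinc : (G.replaceEdge f e).incidenceSet v =
        insert e (G.edgeSet \ {f}) ∩ {e' | v ∈ e'} := by
      rw [incidenceSet, edgeSet_replaceEdge he']; rfl
    have hI : G.incidenceSet v \ {f} = G.edgeSet \ {f} ∩ {e' | v ∈ e'} :=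
      Set.inter_sdiff_right_comm
    split_ifs with hve
    · rw [hinc, Set.insert_inter_of_mem (show e ∈ {e' | v ∈ e'} from hve), ← hI,
        Set.ncard_insert_of_notMem fun h => he h.1.1]
    · rw [hinc, Set.insert_inter_of_notMem (show e ∉ {e' | v ∈ e'} from hve), ← hI, add_zero]
  omega

lemma mem_edgeSet_replaceEdge_iff {e' : Sym2 V} (he : ¬e.IsDiag) (he'e : e' ≠ e) (he'f : e' ≠ f) :
    e' ∈ (G.replaceEdge f e).edgeSet ↔ e' ∈ G.edgeSet := by
  simp [edgeSet_replaceEdge he, he'e, he'f]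

/- The transposition `(p q)` maps `N(p) ∩ ({q} ∪ N(q))` into `N(q)`: it sends `q ∈ N(p)` to
`p ∈ N(q)` and fixes every other point, since `p ∉ N(p)`. -/
lemma ncard_neighborSet_inter_insert_le [Finite V] [DecidableEq V] (p q : V) :
    (G.neighborSet p ∩ insert q (G.neighborSet q)).ncard ≤ (G.neighborSet q).ncard := by
  rw [← Set.ncard_image_of_injective _ (Equiv.swap p q).injective]
  refine Set.ncard_le_ncard ?_
  rintro _ ⟨y, ⟨hpy, rfl | hqy⟩, rfl⟩
  · rw [Equiv.swap_apply_right]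
    exact hpy.symm
  · rwa [Equiv.swap_apply_of_ne_of_ne hpy.ne' (G.ne_of_adj hqy).symm]

lemma one_lt_ncard_neighborSet_sdiff_insert [Finite V] {p q : V}
    (hdeg : (G.neighborSet q).ncard + 2 ≤ (G.neighborSet p).ncard) :
    1 < (G.neighborSet p \ insert q (G.neighborSet q)).ncard := by
  classical
  have := Set.ncard_inter_add_ncard_sdiff_eq_ncard (G.neighborSet p) (insert q (G.neighborSet q))
  have := G.ncard_neighborSet_inter_insert_le p q
  omega

end SimpleGraph

lemma Set.exists_mem_sym2_ne_of_one_lt_ncard {V : Type*} {s : Set V} {p q : V} (hs : 1 < s.ncard)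
    (hpq : p ≠ q) (hq : q ∉ s) (e : Sym2 V) : ∃ x ∈ s, s(p, x) ≠ e ∧ s(q, x) ≠ e := by
  obtain ⟨a, b, ha, hb, hab⟩ := (Set.one_lt_ncard_iff (Set.finite_of_ncard_pos (by omega))).mp hs
  by_contra! hbad
  rcases eq_or_ne s(p, a) e with hpa | hpa <;> rcases eq_or_ne s(p, b) e with hpb | hpb
  · exact hab (Sym2.congr_right.mp (hpa.trans hpb.symm))
  · obtain ⟨h, -⟩ | ⟨-, rfl⟩ := Sym2.eq_iff.mp (hpa.trans (hbad b hb hpb).symm)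
    exacts [hpq h, hq ha]
  · obtain ⟨h, -⟩ | ⟨-, rfl⟩ := Sym2.eq_iff.mp (hpb.trans (hbad a ha hpa).symm)
    exacts [hpq h, hq hb]
  · exact hab (Sym2.congr_right.mp ((hbad a ha hpa).trans (hbad b hb hpb).symm))

section DegreeSequence

variable {n : ℕ}

lemma IsRealization.exists_transfer {γ : Fin n → ℕ} {G : SimpleGraph (Fin n)}
    (hG : IsRealization γ G) {p q : Fin n} (hpq : p ≠ q) (hgap : γ q + 2 ≤ γ p)
    (e : Sym2 (Fin n)) :
    ∃ (γ' : Fin n → ℕ) (H : SimpleGraph (Fin n)), IsRealization γ' H ∧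
      γ' + Pi.single p 1 = γ + Pi.single q 1 ∧ (e ∈ H.edgeSet ↔ e ∈ G.edgeSet) := by
  have hdeg : (G.neighborSet q).ncard + 2 ≤ (G.neighborSet p).ncard := by rwa [hG p, hG q]
  obtain ⟨x, ⟨hpx, hx⟩, hpxe, hqxe⟩ :=
    Set.exists_mem_sym2_ne_of_one_lt_ncard (G.one_lt_ncard_neighborSet_sdiff_insert hdeg) hpq
      (fun h => h.2 (Set.mem_insert q _)) e
  rw [Set.mem_insert_iff, not_or] at hx
  obtain ⟨hxq, hqx⟩ := hx
  have hpx' : p ≠ x := G.ne_of_adj hpx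
  have hqx_diag : ¬s(q, x).IsDiag := by simpa using Ne.symm hxq
  refine ⟨_, G.replaceEdge s(p, x) s(q, x), fun _ => rfl, ?_,
    SimpleGraph.mem_edgeSet_replaceEdge_iff hqx_diag hqxe.symm hpxe.symm⟩
  funext v
  have hv :=
    SimpleGraph.ncard_incidenceSet_replaceEdge_add (G := G) (f := s(p, x)) hpx hqx hqx_diag v
  simp only [SimpleGraph.ncard_incidenceSet_eq_ncard_neighborSet, hG v, Sym2.mem_iff] at hv
  simp only [Pi.add_apply, Pi.single_apply]
  split_ifs at hv ⊢ <;> omega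

lemma Majorizes.sum_Iic_le {α β : Fin n → ℕ} (h : Majorizes α β) (q : Fin n) :
    ∑ v ∈ Finset.Iic q, β v ≤ ∑ v ∈ Finset.Iic q, α v := by
  have hIic : Finset.univ.filter (fun v : Fin n => (v : ℕ) < q + 1) = Finset.Iic q := by
    ext v
    simp only [Finset.mem_filter, Finset.mem_univ, true_and, Finset.mem_Iic, Fin.le_def]
    omega
  simpa only [hIic] using h.1 (q + 1) q.isLt

lemma Majorizes.exists_transfer_pair {γ β : Fin n → ℕ} (h : Majorizes γ β) (hne : γ ≠ β) :
    ∃ p q, p < q ∧ β p < γ p ∧ γ q < β q ∧ ∀ v < q, β v ≤ γ v := by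
  have hdeficit : ∃ q, γ q < β q := by
    by_contra! hle
    refine hne (funext fun v => ?_)
    exact ((Finset.sum_eq_sum_iff_of_le fun v _ => hle v).mp h.2.symm v (Finset.mem_univ v)).symm
  obtain ⟨q, hq, hqmin⟩ := wellFounded_lt.has_min {q | γ q < β q} hdeficit
  have hle : ∀ v < q, β v ≤ γ v := fun v hvq => not_lt.mp fun hv => hqmin v hv hvq
  obtain ⟨p, hpq, hp⟩ : ∃ p < q, β p < γ p := by
    by_contra! hge
    have hlt : ∑ v ∈ Finset.Iic q, γ v < ∑ v ∈ Finset.Iic q, β v := by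
      refine Finset.sum_lt_sum (fun v hv => ?_) ⟨q, Finset.mem_Iic.mpr le_rfl, hq⟩
      rcases (Finset.mem_Iic.mp hv).lt_or_eq with hvq | rfl
      exacts [hge v hvq, hq.le]
    exact (h.sum_Iic_le q).not_gt hlt
  exact ⟨p, q, hpq, hp, hq, hle⟩

lemma sum_add_ite_mem_eq_of_add_single_eq {ι M : Type*} [DecidableEq ι] [AddCommMonoid M]
    {f g : ι → M} {p q : ι} {a : M} (hfg : g + Pi.single p a = f + Pi.single q a) (s : Finset ι) :
    ∑ v ∈ s, g v + (if p ∈ s then a else 0) = ∑ v ∈ s, f v + (if q ∈ s then a else 0) := by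
  simpa [Finset.sum_add_distrib, Finset.sum_pi_single'] using congrArg (fun f => ∑ v ∈ s, f v) hfg

lemma Majorizes.of_add_single_eq {γ γ' β : Fin n → ℕ} (h : Majorizes γ β) {p q : Fin n}
    (hpq : p < q) (hp : β p < γ p) (hle : ∀ v < q, β v ≤ γ v)
    (hγ' : γ' + Pi.single p 1 = γ + Pi.single q 1) : Majorizes γ' β := by
  refine ⟨fun k hk => ?_, ?_⟩
  · set s := Finset.univ.filter fun v : Fin n => (v : ℕ) < k
    have hs := sum_add_ite_mem_eq_of_add_single_eq hγ' s
    have hβγ : ∑ v ∈ s, β v ≤ ∑ v ∈ s, γ v := h.1 k hk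
    have hqp : q ∈ s → p ∈ s := by
      simp only [s, Finset.mem_filter, Finset.mem_univ, true_and]
      have := Fin.lt_def.mp hpq
      omega
    have hlt : p ∈ s → q ∉ s → ∑ v ∈ s, β v < ∑ v ∈ s, γ v := fun hps hqs => by
      refine Finset.sum_lt_sum (fun v hv => hle v ?_) ⟨p, hps, hp⟩
      simp only [s, Finset.mem_filter, Finset.mem_univ, true_and] at hv hqs
      exact Fin.lt_def.mpr (by omega)
    split_ifs at hs with hps hqs hqs
    · omega
    · have := hlt hps hqs
      omega
    · exact absurd (hqp hqs) hps
    · omega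
  · have hs := sum_add_ite_mem_eq_of_add_single_eq hγ' Finset.univ
    simp only [Finset.mem_univ, if_true] at hs
    have := h.2
    omega

lemma sum_dist_lt_of_add_single_eq {ι : Type*} [Fintype ι] [DecidableEq ι] {γ γ' β : ι → ℕ}
    {p q : ι} (hp : β p < γ p) (hq : γ q < β q) (hγ' : γ' + Pi.single p 1 = γ + Pi.single q 1) :
    ∑ v, Nat.dist (γ' v) (β v) < ∑ v, Nat.dist (γ v) (β v) := by
  have hpq : p ≠ q := by
    rintro rfl
    omega
  have hpt : ∀ v, γ' v + (if v = p then 1 else 0) = γ v + (if v = q then 1 else 0) := fun v => by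
    simpa [Pi.single_apply] using congrFun hγ' v
  refine Finset.sum_lt_sum (fun v _ => ?_) ⟨p, Finset.mem_univ p, ?_⟩
  · have := hpt v
    unfold Nat.dist
    split_ifs at this <;> subst_vars <;> omega
  · have := hpt p
    rw [if_pos rfl, if_neg hpq] at this
    unfold Nat.dist
    omega

theorem Majorizes.exists_realization_edge_mem_iff {β : Fin n → ℕ} (hβ : Antitone β)
    (e : Sym2 (Fin n)) {γ : Fin n → ℕ} {G : SimpleGraph (Fin n)} (h : Majorizes γ β)
    (hG : IsRealization γ G) : ∃ H, IsRealization β H ∧ (e ∈ H.edgeSet ↔ e ∈ G.edgeSet) := by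
  induction hd : ∑ v, Nat.dist (γ v) (β v) using Nat.strong_induction_on generalizing γ G with
  | _ d ih =>
  obtain rfl | hne := eq_or_ne γ β
  · exact ⟨G, hG, Iff.rfl⟩
  obtain ⟨p, q, hpq, hp, hq, hle⟩ := h.exists_transfer_pair hne
  have hgap : γ q + 2 ≤ γ p := by
    have := hβ hpq.le
    omega
  obtain ⟨γ', H, hH, hγ', hHe⟩ := hG.exists_transfer hpq.ne hgap e
  obtain ⟨K, hK, hKe⟩ :=
    ih _ (hd ▸ sum_dist_lt_of_add_single_eq hp hq hγ') (h.of_add_single_eq hpq hp hle hγ') hH rfl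
  exact ⟨K, hK, hKe.trans hHe⟩

end DegreeSequence

theorem forced_forbidden_monotone_in_majorization_general {n : ℕ} (α β : Fin n → ℕ)
    (hβ : Antitone β)
    (h : Majorizes α β) :
    ∀ i j : Fin n, i ≠ j →
      (ForcedEdge β i j → ForcedEdge α i j) ∧
      (ForbiddenEdge β i j → ForbiddenEdge α i j) := by
  intro i j _
  constructor
  · intro hforced G hG
    obtain ⟨H, hH, hHG⟩ := h.exists_realization_edge_mem_iff hβ s(i, j) hG
    exact hHG.mp (hforced H hH)
  · intro hforbidden G hG hGij
    obtain ⟨H, hH, hHG⟩ := h.exists_realization_edge_mem_iff hβ s(i, j) hG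
    exact hforbidden H hH (hHG.mpr hGij)

/-- Barrus: if `α` and `β` are graphic nonincreasing degree
sequences with `α ≽ β`, then every forced edge of `β` is forced for `α` and every
forbidden edge of `β` is forbidden for `α`: `F(α) ⊇ F(β)` and `B(α) ⊇ B(β)`. -/
theorem forced_forbidden_monotone_in_majorization {n : ℕ} (α β : Fin n → ℕ)
    (hα : Antitone α) (hβ : Antitone β)
    (hαb : ∀ v, α v ≤ n - 1) (hβb : ∀ v, β v ≤ n - 1)
    (hαg : Graphic α) (hβg : Graphic β)
    (h : Majorizes α β) :
    ∀ i j : Fin n, i ≠ j →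
      (ForcedEdge β i j → ForcedEdge α i j) ∧
      (ForbiddenEdge β i j → ForbiddenEdge α i j) :=
  forced_forbidden_monotone_in_majorization_general α β hβ h
end

section
/- Let α be a graphic degree sequence of length n with α_n ≥ 1. If α has at least one forced edge or at least one forbidden edge, then every realization G of α is maximally edge-connected: G is connected, and for every set D of edges of G with |D| < α_n, the graph obtained from G by deleting the edges in D is still connected (hence the edge connectivity of G equals the minimum degree α_n). -/
/-!
Let `δ = α_n` be the minimum degree and suppose some vertex set `X` is separated from its
complement by fewer than `δ` edges of a realization `G`. Counting degrees, each side then has more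
than `δ` vertices and contains a vertex all of whose neighbours lie on its own side. Around a forced
(resp. forbidden) edge `ij` these vertices supply one or two 2-switches, which preserve all
degrees, producing a realization without `ij` (resp. with `ij`). When a forbidden edge crosses the
cut, a direct count already suffices. Hence every edge cut of `G` has at least `δ` edges.
-/

namespace SimpleGraph

section Switch

variable {V : Type*} {G : SimpleGraph V} {a b c d x y : V}

/-- The 2-switch trading the edges `ab`, `cd` for `ac`, `bd`. -/
def switch (G : SimpleGraph V) (a b c d : V) : SimpleGraph V :=
  G \ (edge a b ⊔ edge c d) ⊔ edge a c ⊔ edge b d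

lemma switch_adj : (G.switch a b c d).Adj x y ↔
    G.Adj x y ∧ ¬((edge a b).Adj x y ∨ (edge c d).Adj x y) ∨
      (edge a c).Adj x y ∨ (edge b d).Adj x y := by
  simp only [switch, sup_adj, sdiff_adj, or_assoc]

lemma switch_comm : G.switch a b c d = G.switch c d a b := by
  ext x y
  simp only [switch_adj, edge_adj]
  tauto

lemma switch_swap : G.switch a b c d = G.switch b a d c := by
  ext x y
  simp only [switch_adj, edge_adj]
  tauto

lemma neighborSet_switch_left (hab : a ≠ b) (hac : a ≠ c) (had : a ≠ d) :
    (G.switch a b c d).neighborSet a = insert c (G.neighborSet a \ {b}) := by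
  ext u
  simp only [mem_neighborSet, switch_adj, edge_adj, Set.mem_insert_iff, Set.mem_sdiff,
    Set.mem_singleton_iff]
  grind [G.ne_of_adj]

lemma switch_adj_iff_of_ne (ha : x ≠ a) (hb : x ≠ b) (hc : x ≠ c) (hd : x ≠ d) :
    (G.switch a b c d).Adj x y ↔ G.Adj x y := by
  simp only [switch_adj, edge_adj]
  tauto

lemma switch_adj_left (hac : a ≠ c) : (G.switch a b c d).Adj a c := by
  simp [switch_adj, edge_adj, hac]

lemma not_switch_adj_left (had : a ≠ d) (hbc : b ≠ c) : ¬(G.switch a b c d).Adj a b := by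
  simp only [switch_adj, edge_adj]
  grind [G.ne_of_adj]

lemma adj_or_eq_of_switch_adj (h : (G.switch a b c d).Adj x y) :
    G.Adj x y ∨ s(x, y) = s(a, c) ∨ s(x, y) = s(b, d) := by
  simp only [switch_adj, edge_adj, Sym2.eq_iff] at h ⊢
  tauto

lemma ncard_neighborSet_switch (hab : G.Adj a b) (hcd : G.Adj c d) (hac : ¬G.Adj a c)
    (hbd : ¬G.Adj b d) (hac' : a ≠ c) (had : a ≠ d) (hbc : b ≠ c) (hbd' : b ≠ d) (x : V) :
    ((G.switch a b c d).neighborSet x).ncard = (G.neighborSet x).ncard := by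
  by_cases hxa : x = a
  · rw [hxa, neighborSet_switch_left hab.ne hac' had]
    exact Set.ncard_exchange hac hab
  by_cases hxb : x = b
  · rw [hxb, switch_swap, neighborSet_switch_left hab.ne.symm hbd' hbc]
    exact Set.ncard_exchange hbd hab.symm
  by_cases hxc : x = c
  · rw [hxc, switch_comm, neighborSet_switch_left hcd.ne hac'.symm hbc.symm]
    exact Set.ncard_exchange (fun h ↦ hac h.symm) hcd
  by_cases hxd : x = d
  · rw [hxd, switch_comm, switch_swap, neighborSet_switch_left hcd.ne.symm hbd'.symm had.symm]
    exact Set.ncard_exchange (fun h ↦ hbd h.symm) hcd.symm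
  congr 1
  ext y
  exact switch_adj_iff_of_ne hxa hxb hxc hxd

end Switch

section Cut

open Finset

variable {V : Type*} [Fintype V] [DecidableEq V] {G : SimpleGraph V} [DecidableRel G.Adj]
  {X : Finset V} {δ : ℕ} {v y : V}

lemma card_interedges_compl_comm : #(G.interedges Xᶜ Xᶜᶜ) = #(G.interedges X Xᶜ) := by
  have := G.symm
  rw [compl_compl]
  exact Rel.card_interedges_comm _ _

lemma card_le_card_interedges_of_forall_exists_adj (h : ∀ x ∈ X, ∃ y ∉ X, G.Adj x y) :
    #X ≤ #(G.interedges X Xᶜ) := by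
  calc #X ≤ #((G.interedges X Xᶜ).image Prod.fst) := card_le_card fun x hx ↦ by
        obtain ⟨y, hy, hxy⟩ := h x hx
        exact mem_image.2 ⟨(x, y), by simp [mem_interedges_iff, hx, hy, hxy], rfl⟩
    _ ≤ #(G.interedges X Xᶜ) := card_image_le

lemma sum_card_neighborFinset_sdiff_le :
    ∑ x ∈ X, #(G.neighborFinset x \ X) ≤ #(G.interedges X Xᶜ) := by
  rw [← card_sigma]
  refine card_le_card_of_injOn (fun p ↦ (p.1, p.2)) ?_ ?_
  · intro p hp
    simp only [coe_sigma, Set.mem_sigma_iff, mem_coe, mem_sdiff, mem_neighborFinset] at hp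
    simp [mem_interedges_iff, hp.1, hp.2.2, hp.2.1]
  · intro p _ q _ h
    simp only [Prod.mk.injEq] at h
    exact Sigma.ext h.1 (heq_of_eq h.2)

lemma lt_card_of_card_interedges_lt (hX : X.Nonempty) (hδ : ∀ v, δ ≤ G.degree v)
    (hcut : #(G.interedges X Xᶜ) < δ) : δ < #X := by
  by_contra! hXδ
  have hout : ∀ x ∈ X, δ + 1 ≤ #(G.neighborFinset x \ X) + #X := by
    intro x hx
    have hin : #(G.neighborFinset x ∩ X) + 1 ≤ #X := by
      rw [← card_erase_add_one hx, add_le_add_iff_right]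
      exact card_le_card fun y hy ↦ mem_erase.2
        ⟨(G.ne_of_adj (mem_neighborFinset _ _ _ |>.1 (mem_inter.1 hy).1)).symm, (mem_inter.1 hy).2⟩
    have := card_sdiff_add_card_inter (G.neighborFinset x) X
    rw [card_neighborFinset_eq_degree] at this
    linarith [hδ x]
  have hsum : #X * (δ + 1) ≤ #(G.interedges X Xᶜ) + #X * #X := by
    calc #X * (δ + 1) = ∑ _x ∈ X, (δ + 1) := by rw [sum_const, smul_eq_mul]
      _ ≤ ∑ x ∈ X, (#(G.neighborFinset x \ X) + #X) := sum_le_sum hout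
      _ ≤ #(G.interedges X Xᶜ) + #X * #X := by
        rw [sum_add_distrib, sum_const, smul_eq_mul]
        gcongr
        exact sum_card_neighborFinset_sdiff_le
  have hX1 := hX.card_pos
  -- `k * (δ + 1 - k) ≥ δ` whenever `1 ≤ k ≤ δ`
  nlinarith

lemma exists_neighborSet_subset_of_card_interedges_lt (hX : X.Nonempty)
    (hδ : ∀ v, δ ≤ G.degree v) (hcut : #(G.interedges X Xᶜ) < δ) :
    ∃ v ∈ X, G.neighborSet v ⊆ X := by
  by_contra! h
  have := card_le_card_interedges_of_forall_exists_adj fun x hx ↦ by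
    obtain ⟨y, hxy, hy⟩ := Set.not_subset.1 (h x hx)
    exact ⟨y, hy, hxy⟩
  linarith [lt_card_of_card_interedges_lt hX hδ hcut]

lemma degree_le_card_interedges (hv : v ∈ X) (hy : y ∉ X)
    (h : ∀ x ∈ X, G.Adj v x → G.Adj x y) : G.degree v ≤ #(G.interedges X Xᶜ) := by
  rw [← card_neighborFinset_eq_degree]
  refine card_le_card_of_injOn (fun x ↦ if x ∈ X then (x, y) else (v, x)) ?_ ?_
  · intro x hx
    simp only [coe_neighborFinset, mem_neighborSet] at hx
    dsimp only
    split_ifs with hxX <;> simp [mem_interedges_iff, *]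
  · intro x hx x' hx' hxx'
    simp only [coe_neighborFinset, mem_neighborSet] at hx hx'
    dsimp only at hxx'
    split_ifs at hxx' <;> grind [G.ne_of_adj]

lemma exists_adj_not_adj_of_card_interedges_lt {q : V} (hv : G.neighborSet v ⊆ X) (hq : q ∉ X)
    (hcut : #(G.interedges X Xᶜ) < G.degree v) : ∃ p, G.Adj v p ∧ ¬G.Adj q p := by
  by_contra! h
  rw [← card_neighborFinset_eq_degree] at hcut
  refine hcut.not_ge (card_le_card_of_injOn (fun p ↦ (p, q)) (fun p hp ↦ ?_) ?_)
  · simp only [coe_neighborFinset, mem_neighborSet] at hp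
    simpa [mem_interedges_iff, hq] using ⟨hv hp, (h p hp).symm⟩
  · intro p _ p' _ hpp'
    exact (Prod.mk.inj hpp').1

lemma isEdgeConnected_of_forall_le_card_interedges {k : ℕ}
    (h : ∀ X : Finset V, X.Nonempty → Xᶜ.Nonempty → k ≤ #(G.interedges X Xᶜ)) :
    G.IsEdgeConnected k := by
  classical
  intro u v D hD
  by_contra huv
  set X := univ.filter ((G.deleteEdges D).Reachable u)
  have hcut : ∀ p ∈ G.interedges X Xᶜ, s(p.1, p.2) ∈ D := by
    intro p hp
    simp only [X, mem_interedges_iff, mem_compl, mem_filter, mem_univ, true_and] at hp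
    by_contra hpD
    exact hp.2.1 (hp.1.trans (deleteEdges_adj.2 ⟨hp.2.2, hpD⟩).reachable)
  have hinj : Set.InjOn (fun p : V × V ↦ s(p.1, p.2)) (G.interedges X Xᶜ) := by
    intro p hp q hq hpq
    simp only [X, mem_coe, mem_interedges_iff, mem_compl, mem_filter, mem_univ,
      true_and] at hp hq
    rcases Sym2.eq_iff.1 hpq with ⟨h1, h2⟩ | ⟨h1, h2⟩
    · exact Prod.ext h1 h2
    · exact absurd (h1 ▸ hp.1) hq.2.1
  have hle : (#(G.interedges X Xᶜ) : ℕ∞) ≤ D.encard := by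
    rw [← Set.encard_coe_eq_coe_finsetCard]
    exact Set.encard_le_encard_of_injOn (fun p hp ↦ hcut p hp) hinj
  have hk := h X ⟨u, by simp [X]⟩ ⟨v, by simpa [X] using huv⟩
  exact hD.not_ge ((Nat.cast_le.2 hk).trans hle)

end Cut

end SimpleGraph

open SimpleGraph Finset

section Realization

variable {n : ℕ} {α : Fin n → ℕ} {G : SimpleGraph (Fin n)} {i j a b c d x y : Fin n}

lemma IsRealization.switch (hG : IsRealization α G) (hab : G.Adj a b) (hcd : G.Adj c d)
    (hac : ¬G.Adj a c) (hbd : ¬G.Adj b d) (hac' : a ≠ c) (had : a ≠ d) (hbc : b ≠ c)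
    (hbd' : b ≠ d) : IsRealization α (G.switch a b c d) := fun v ↦
  (ncard_neighborSet_switch hab hcd hac hbd hac' had hbc hbd' v).trans (hG v)

lemma IsRealization.degree_eq [DecidableRel G.Adj] (hG : IsRealization α G) (v : Fin n) :
    G.degree v = α v := by
  rw [← hG v, ← card_neighborSet_eq_degree, Set.ncard_eq_toFinset_card', Set.toFinset_card]

lemma ForcedEdge.adj_or_adj (hf : ForcedEdge α i j) (hG : IsRealization α G) (hxy : G.Adj x y)
    (hix : i ≠ x) (hiy : i ≠ y) (hjx : j ≠ x) (hjy : j ≠ y) : G.Adj i x ∨ G.Adj j y := by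
  by_contra! h
  exact not_switch_adj_left hiy hjx (hf _ (hG.switch (hf G hG) hxy h.1 h.2 hix hiy hjx hjy))

lemma ForbiddenEdge.symm (hf : ForbiddenEdge α i j) : ForbiddenEdge α j i :=
  fun G hG h ↦ hf G hG h.symm

lemma ForbiddenEdge.adj (hf : ForbiddenEdge α i j) (hij : i ≠ j) (hG : IsRealization α G)
    (hix : G.Adj i x) (hjy : G.Adj j y) (hxy : x ≠ y) : G.Adj x y := by
  by_contra h
  have hiy : i ≠ y := by rintro rfl; exact hf G hG hjy.symm
  have hxj : x ≠ j := by rintro rfl; exact hf G hG hix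
  exact hf _ (hG.switch hix hjy (hf G hG) h hij hiy hxj hxy) (switch_adj_left hij)

end Realization

section EdgeCut

variable {n : ℕ} {α : Fin n → ℕ} {G : SimpleGraph (Fin n)} [DecidableRel G.Adj] {i j : Fin n}
  {X : Finset (Fin n)} {δ : ℕ}

lemma ForcedEdge.le_card_interedges_of_mem (hf : ForcedEdge α i j) (hG : IsRealization α G)
    (hδ : ∀ v, δ ≤ α v) (hi : i ∈ X) (hj : j ∈ X) (hXc : Xᶜ.Nonempty) :
    δ ≤ #(G.interedges X Xᶜ) := by
  by_contra! hcut
  have hdeg v : δ ≤ G.degree v := hG.degree_eq v ▸ hδ v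
  rw [← card_interedges_compl_comm] at hcut
  obtain ⟨w, hw, hwX⟩ := exists_neighborSet_subset_of_card_interedges_lt hXc hdeg hcut
  obtain ⟨y, hwy, hjy⟩ := exists_adj_not_adj_of_card_interedges_lt hwX (by simpa using hj)
    (hcut.trans_le (hdeg w))
  have hy := hwX hwy
  simp only [coe_compl, Set.mem_compl_iff, mem_coe, mem_compl] at hw hy
  rcases hf.adj_or_adj hG hwy (by grind) (by grind) (by grind) (by grind) with hiw | hjy'
  · exact (by simpa using hwX hiw.symm : i ∉ X) hi
  · exact hjy hjy'

lemma ForcedEdge.le_card_interedges_of_mem_of_notMem (hf : ForcedEdge α i j)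
    (hG : IsRealization α G) (hδ : ∀ v, δ ≤ α v) (hi : i ∈ X) (hj : j ∉ X) :
    δ ≤ #(G.interedges X Xᶜ) := by
  by_contra! hcut
  have hdeg v : δ ≤ G.degree v := hG.degree_eq v ▸ hδ v
  have hcut' := hcut
  rw [← card_interedges_compl_comm] at hcut'
  obtain ⟨v, hv, hvX⟩ := exists_neighborSet_subset_of_card_interedges_lt ⟨i, hi⟩ hdeg hcut
  obtain ⟨w, hw, hwX⟩ :=
    exists_neighborSet_subset_of_card_interedges_lt ⟨j, by simpa using hj⟩ hdeg hcut'
  obtain ⟨q, hwq⟩ :=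
    (G.degree_pos_iff_exists_adj w).1 (Nat.zero_lt_of_lt (hcut.trans_le (hdeg w)))
  have hq := hwX hwq
  simp only [coe_compl, Set.mem_compl_iff, mem_coe, mem_compl] at hw hq
  obtain ⟨p, hvp, hqp⟩ := exists_adj_not_adj_of_card_interedges_lt hvX hq
    (hcut.trans_le (hdeg v))
  have hp : p ∈ X := hvX hvp
  have hij := hf G hG
  have hvw : ¬G.Adj v w := fun h ↦ hw (hvX h)
  have hiv : i ≠ v := by rintro rfl; exact hj (hvX hij)
  have hjw : j ≠ w := by rintro rfl; simpa [hi] using hwX hij.symm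
  -- Trading `vp, wq` for `vw, pq` gives a realization in which `ij, wv` could be traded for
  -- `iw, jv`.
  have hG' := hG.switch hvp hwq hvw (fun h ↦ hqp h.symm) (by grind) (by grind) (by grind)
    (by grind)
  rcases hf.adj_or_adj hG' (switch_adj_left (by grind)).symm (by grind) hiv hjw (by grind)
    with h | h <;> rcases adj_or_eq_of_switch_adj h with h | h | h
  · simpa [hi] using hwX h.symm
  · grind [Sym2.eq_iff]
  · grind [Sym2.eq_iff, G.ne_of_adj]
  · exact hj (hvX h.symm)
  · grind [Sym2.eq_iff]
  · grind [Sym2.eq_iff, G.ne_of_adj]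

lemma ForbiddenEdge.neighborSet_subset_of_card_interedges_lt (hf : ForbiddenEdge α i j)
    (hij : i ≠ j) (hG : IsRealization α G) (hcut : #(G.interedges X Xᶜ) < α i) (hi : i ∈ X) :
    G.neighborSet j ⊆ X := by
  intro y hjy
  by_contra hy
  refine (hcut.trans_le (hG.degree_eq i ▸ degree_le_card_interedges hi hy ?_)).false
  intro x hx hix
  exact hf.adj hij hG hix hjy (by rintro rfl; exact hy hx)

lemma ForbiddenEdge.le_card_interedges_of_mem_of_notMem (hf : ForbiddenEdge α i j)
    (hij : i ≠ j) (hG : IsRealization α G) (hδ : ∀ v, δ ≤ α v) (hi : i ∈ X) (hj : j ∉ X) :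
    δ ≤ #(G.interedges X Xᶜ) := by
  by_contra! hcut
  have hjX := hf.neighborSet_subset_of_card_interedges_lt hij hG (hcut.trans_le (hδ i)) hi
  rw [← card_interedges_compl_comm] at hcut
  refine (hcut.trans_le (hδ j)).not_ge (hG.degree_eq j ▸ degree_le_card_interedges
    (by simpa using hj) (by simpa using hi) fun x hx hjx ↦ ?_)
  exact absurd (hjX hjx) (by simpa using hx)

lemma ForbiddenEdge.le_card_interedges_of_mem (hf : ForbiddenEdge α i j) (hij : i ≠ j)
    (hG : IsRealization α G) (hδ : ∀ v, δ ≤ α v) (hi : i ∈ X) (hj : j ∈ X) (hXc : Xᶜ.Nonempty) :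
    δ ≤ #(G.interedges X Xᶜ) := by
  by_contra! hcut
  have hdeg v : δ ≤ G.degree v := hG.degree_eq v ▸ hδ v
  have hjX := hf.neighborSet_subset_of_card_interedges_lt hij hG (hcut.trans_le (hδ i)) hi
  have hiX := hf.symm.neighborSet_subset_of_card_interedges_lt hij.symm hG
    (hcut.trans_le (hδ j)) hj
  have hcut' := hcut
  rw [← card_interedges_compl_comm] at hcut'
  obtain ⟨v, hv, hvX⟩ := exists_neighborSet_subset_of_card_interedges_lt hXc hdeg hcut'
  obtain ⟨w, hvw⟩ :=
    (G.degree_pos_iff_exists_adj v).1 (Nat.zero_lt_of_lt (hcut'.trans_le (hdeg v)))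
  have hw := hvX hvw
  simp only [coe_compl, Set.mem_compl_iff, mem_coe, mem_compl] at hv hw
  obtain ⟨u, hiu, hwu⟩ := exists_adj_not_adj_of_card_interedges_lt hiX hw
    (hcut.trans_le (hdeg i))
  have hu : u ∈ X := hiX hiu
  obtain ⟨z, hjz⟩ :=
    (G.degree_pos_iff_exists_adj j).1 (Nat.zero_lt_of_lt (hcut.trans_le (hdeg j)))
  have hz : z ∈ X := hjX hjz
  have hju : j ≠ u := by rintro rfl; exact hf G hG hiu
  have hzi : z ≠ i := by rintro rfl; exact hf G hG hjz.symm
  -- Trading `iu, vw` for `iv, uw` gives a realization in which `iv, jz` could be traded for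
  -- `ij, vz`.
  have hG' := hG.switch hiu hvw (fun h ↦ hv (hiX h)) (fun h ↦ hwu h.symm) (by grind) (by grind)
    (by grind) (by grind)
  have hvz := hf.adj hij hG' (switch_adj_left (by grind))
    ((switch_adj_iff_of_ne hij.symm hju (by grind) (by grind)).2 hjz) (by grind)
  rcases adj_or_eq_of_switch_adj hvz with h | h | h
  · exact (by simpa using hvX h : z ∉ X) hz
  · grind [Sym2.eq_iff]
  · grind [Sym2.eq_iff, G.ne_of_adj]

lemma le_card_interedges_of_forcedEdge_or_forbiddenEdge
    (h : ForcedEdge α i j ∨ ForbiddenEdge α i j) (hij : i ≠ j) (hG : IsRealization α G)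
    (hδ : ∀ v, δ ≤ α v) (hi : i ∈ X) (hXc : Xᶜ.Nonempty) : δ ≤ #(G.interedges X Xᶜ) := by
  by_cases hj : j ∈ X
  · rcases h with hf | hf
    · exact hf.le_card_interedges_of_mem hG hδ hi hj hXc
    · exact hf.le_card_interedges_of_mem hij hG hδ hi hj hXc
  · rcases h with hf | hf
    · exact hf.le_card_interedges_of_mem_of_notMem hG hδ hi hj
    · exact hf.le_card_interedges_of_mem_of_notMem hij hG hδ hi hj

lemma IsRealization.le_card_interedges (hG : IsRealization α G) (hδ : ∀ v, δ ≤ α v)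
    (h : (∃ i j : Fin n, i ≠ j ∧ ForcedEdge α i j) ∨
      (∃ i j : Fin n, i ≠ j ∧ ForbiddenEdge α i j))
    (hX : X.Nonempty) (hXc : Xᶜ.Nonempty) : δ ≤ #(G.interedges X Xᶜ) := by
  obtain ⟨i, j, hij, hf⟩ : ∃ i j, i ≠ j ∧ (ForcedEdge α i j ∨ ForbiddenEdge α i j) := by
    rcases h with ⟨i, j, hij, hf⟩ | ⟨i, j, hij, hf⟩
    exacts [⟨i, j, hij, .inl hf⟩, ⟨i, j, hij, .inr hf⟩]
  by_cases hi : i ∈ X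
  · exact le_card_interedges_of_forcedEdge_or_forbiddenEdge hf hij hG hδ hi hXc
  · rw [← card_interedges_compl_comm]
    exact le_card_interedges_of_forcedEdge_or_forbiddenEdge hf hij hG hδ (mem_compl.2 hi)
      (by rwa [compl_compl])

end EdgeCut

/-- let `α` be a graphic nonincreasing degree sequence with
`α_n ≥ 1`.  If `α` has at least one forced edge or at least one forbidden edge,
then every realization `G` of `α` is maximally edge-connected: `G` is connected,
and removing any set of fewer than `α_n` edges of `G` leaves it connected. -/
theorem maximally_edge_connected {n : ℕ} (hn : 1 ≤ n) (α : Fin n → ℕ)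
    (hα : Antitone α)
    (hmin : 1 ≤ α ⟨n - 1, by omega⟩)
    (h : (∃ i j : Fin n, i ≠ j ∧ ForcedEdge α i j) ∨
         (∃ i j : Fin n, i ≠ j ∧ ForbiddenEdge α i j))
    (G : SimpleGraph (Fin n)) (hG : IsRealization α G) :
    G.Connected ∧
      ∀ D : Set (Sym2 (Fin n)), D ⊆ G.edgeSet → D.ncard < α ⟨n - 1, by omega⟩ →
        (G.deleteEdges D).Connected := by
  classical
  have : Nonempty (Fin n) := ⟨⟨0, hn⟩⟩
  have hδ v : α ⟨n - 1, by omega⟩ ≤ α v := hα (Nat.le_sub_one_of_lt v.isLt)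
  have hG' : G.IsEdgeConnected (α ⟨n - 1, by omega⟩) :=
    isEdgeConnected_of_forall_le_card_interedges fun X hX hXc ↦
      hG.le_card_interedges hδ h hX hXc
  refine ⟨hG'.connected (by omega), fun D _ hD ↦ ⟨fun u v ↦ hG' u v ?_⟩⟩
  rw [← D.toFinite.cast_ncard_eq]
  exact_mod_cast hD
end
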